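/- Let A be an m×m matrix over ℚ whose minimal polynomial has no repeated roots and splits over ℚ; concretely, suppose A = T·diag(λ_1,…,λ_m)·T^{−1} for some rational λ_1,…,λ_m and some invertible m×m rational matrix T. Let b be the least common denominator of λ_1,…,λ_m, and let t_1, t_2 be the least common denominators of the entries of T and of T^{−1} respectively. Let [A] be the derivation of ℚ[y_1,…,y_m] given by [A]P = Σ_{l,j} A_{lj}·y_j·∂P/∂y_l, and define A_n = ([A]−(n−1))∘⋯∘([A]−1)∘[A] as a composition of ℚ-linear endomorphisms of ℚ[y_1,…,y_m]. Then the positive integers ψ_k = (t_1 t_2)^k · b^k · ∏_{p prime, p ∣ b} p^{τ_p(k)} satisfy: for all k ∈ ℕ and 0 ≤ n ≤ k, the operator ψ_k·(1/n!)·A_n maps ℤ[y_1,…,y_m] into itself, and limsup_{k→∞} ψ_k^{1/k} ≤ t_1 t_2 · b · e^{χ(b)}. -/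

import Mathlib

/-- The falling factorial `⟨a⟩_n = a(a-1)⋯(a-n+1)` in a (possibly noncommutative) ring. -/
def fall {R : Type*} [Ring R] (a : R) : ℕ → R
  | 0 => 1
  | n + 1 => fall a n * (a - (n : R))

/-- `χ(b) = ∑_{p ∣ b, p prime} log p / (p-1)`. -/
noncomputable def chi (b : ℕ) : ℝ := ∑ p ∈ b.primeFactors, Real.log p / ((p : ℝ) - 1)

/-- `τ_p(k)`, the exponent of the prime `p` in `k!`. -/
def tau (p k : ℕ) : ℕ := (Nat.factorial k).factorization p

/-- `b_{M,l} = ∑_j M_{lj} y_j`. -/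
noncomputable def bpoly {m : ℕ} (M : Matrix (Fin m) (Fin m) ℚ) (l : Fin m) :
    MvPolynomial (Fin m) ℚ :=
  ∑ j, MvPolynomial.C (M l j) * MvPolynomial.X j

/-- The derivation `[M] : P ↦ ∑_{l,j} M_{lj} y_j ∂P/∂y_l`. -/
noncomputable def derOp {m : ℕ} (M : Matrix (Fin m) (Fin m) ℚ)
    (P : MvPolynomial (Fin m) ℚ) : MvPolynomial (Fin m) ℚ :=
  ∑ l, bpoly M l * MvPolynomial.pderiv l P

/-- The composition `A_n = ([A]-(n-1))∘([A]-(n-2))∘⋯∘([A]-1)∘[A]`. -/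
noncomputable def An {m : ℕ} (A : Matrix (Fin m) (Fin m) ℚ) :
    ℕ → MvPolynomial (Fin m) ℚ → MvPolynomial (Fin m) ℚ
  | 0 => id
  | n + 1 => fun P => derOp A (An A n P) - (n : ℚ) • An A n P

namespace S18

open Finset

lemma prod_modEq {q : ℤ} {s : Finset ℕ} (f g : ℕ → ℤ) (h : ∀ i ∈ s, f i ≡ g i [ZMOD q]) :
    (∏ i ∈ s, f i) ≡ (∏ i ∈ s, g i) [ZMOD q] := by
  classical
  induction s using Finset.induction_on with
  | empty => simp
  | insert x s' hx ih =>
    rw [Finset.prod_insert hx, Finset.prod_insert hx]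
    exact (h x (mem_insert_self x s')).mul (ih fun i hi => h i (mem_insert_of_mem hi))

lemma NT1 (n : ℕ) (a : ℤ) : (n.factorial : ℤ) ∣ ∏ i ∈ range n, (a - i) := by
  have he : ∀ k : ℕ, (descPochhammer ℤ k).eval a = ∏ i ∈ range k, (a - i) := by
    intro k
    induction k with
    | zero => simp
    | succ k ih => rw [descPochhammer_succ_eval, prod_range_succ, ih]
  rw [← he, Polynomial.eval_eq_smeval, Ring.descPochhammer_eq_factorial_smul_choose]
  exact Dvd.intro _ (by rw [nsmul_eq_mul])

lemma NT2 {p : ℕ} (hp : p.Prime) {b : ℕ} (hpb : ¬ p ∣ b) (c : ℤ) (n : ℕ) :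
    ((p : ℤ)) ^ (tau p n) ∣ ∏ i ∈ range n, (c - i * b) := by
  set q : ℕ := p ^ tau p n with hq
  have hq0 : q ≠ 0 := pow_ne_zero _ hp.pos.ne'
  haveI : NeZero q := ⟨hq0⟩
  have hcop : Nat.Coprime b q := ((Nat.Prime.coprime_iff_not_dvd hp).mpr hpb).symm.pow_right _
  set u : (ZMod q)ˣ := ZMod.unitOfCoprime b hcop with hu
  set a : ℤ := ((((u⁻¹ : (ZMod q)ˣ) : ZMod q) * (c : ZMod q)).val : ℤ) with ha
  have hab : ((a * b - c : ℤ) : ZMod q) = 0 := by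
    push_cast
    rw [ha]
    push_cast [ZMod.intCast_cast, ZMod.intCast_zmod_cast]
    rw [ZMod.natCast_val, ZMod.cast_id]
    have hb : ((b : ZMod q)) = (u : ZMod q) := by simp [hu, ZMod.coe_unitOfCoprime]
    rw [hb, mul_comm ((u⁻¹ : (ZMod q)ˣ) : ZMod q) _, mul_assoc, ← Units.val_mul, inv_mul_cancel]
    simp
  have hdvd : (q : ℤ) ∣ (a * b - c) := by
    rwa [ZMod.intCast_zmod_eq_zero_iff_dvd] at hab
  have hcong : (∏ i ∈ range n, (c - i * b)) ≡ (∏ i ∈ range n, ((a - i) * b)) [ZMOD (q : ℤ)] := by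
    refine prod_modEq _ _ fun i _ => ?_
    refine Int.ModEq.symm (Int.modEq_iff_dvd.mpr ?_)
    rw [show (c - i*b) - (a - i)*b = -(a * b - c) by ring]
    exact dvd_neg.mpr hdvd
  have hdvd2 : (q : ℤ) ∣ ∏ i ∈ range n, ((a - i) * b) := by
    rw [Finset.prod_mul_distrib]
    have h1 : (q : ℤ) ∣ (n.factorial : ℤ) := by
      exact_mod_cast Int.natCast_dvd_natCast.mpr (hq ▸ Nat.ordProj_dvd n.factorial p)
    exact dvd_mul_of_dvd_left (h1.trans (NT1 n a)) _
  have hfin : (q : ℤ) ∣ ∏ i ∈ range n, (c - i * b) :=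
    (Int.modEq_zero_iff_dvd).mp (hcong.trans ((Int.modEq_zero_iff_dvd).mpr hdvd2))
  have : ((q : ℕ) : ℤ) = (p:ℤ) ^ tau p n := by rw [hq]; push_cast; ring
  rwa [this] at hfin

lemma NT3 {b : ℕ} (hb : 0 < b) (c : ℤ) (n : ℕ) :
    (n.factorial : ℤ) ∣ ((∏ p ∈ b.primeFactors, p ^ tau p n : ℕ) : ℤ) * ∏ i ∈ range n, (c - i * b) := by
  classical
  have hfact : (n.factorial : ℤ) = ∏ p ∈ (n.factorial).primeFactors, (p : ℤ) ^ tau p n := by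
    rw [show (∏ p ∈ (n.factorial).primeFactors, (p:ℤ) ^ tau p n)
        = (((∏ p ∈ (n.factorial).primeFactors, p ^ tau p n : ℕ)) : ℤ) by push_cast; rfl]
    congr 1
    conv_lhs => rw [← Nat.factorization_prod_pow_eq_self (Nat.factorial_ne_zero n)]
    rfl
  rw [hfact]
  refine Finset.prod_dvd_of_coprime ?_ ?_
  · intro p hp' r hr' hne
    have hp : p.Prime := Nat.prime_of_mem_primeFactors hp'
    have hr : r.Prime := Nat.prime_of_mem_primeFactors hr'
    have : IsCoprime (p : ℤ) (r : ℤ) := by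
      rw [Int.isCoprime_iff_gcd_eq_one]
      exact_mod_cast (Nat.coprime_primes hp hr).mpr hne
    exact (this.pow : IsCoprime _ _)
  · intro p hp'
    have hp : p.Prime := Nat.prime_of_mem_primeFactors hp'
    by_cases hdb : p ∣ b
    · refine dvd_mul_of_dvd_left ?_ _
      have hmem : p ∈ b.primeFactors := Nat.mem_primeFactors.mpr ⟨hp, hdb, hb.ne'⟩
      have := Finset.dvd_prod_of_mem (fun p => p ^ tau p n) hmem
      exact_mod_cast Int.natCast_dvd_natCast.mpr this
    · exact dvd_mul_of_dvd_right (NT2 hp hdb c n) _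

open Finset

lemma fall_rat (μ : ℚ) (n : ℕ) : fall μ n = ∏ i ∈ range n, (μ - i) := by
  induction n with
  | zero => rfl
  | succ n ih => rw [prod_range_succ, ← ih]; rfl

lemma KS {b : ℕ} (hb : 0 < b) {μ : ℚ} {c : ℤ} (hc : (b:ℚ) * μ = c) (n : ℕ) :
    ∃ z : ℤ, ((b ^ n * ∏ p ∈ b.primeFactors, p ^ tau p n : ℕ) : ℚ) * fall μ n / n.factorial = z := by
  obtain ⟨w, hw⟩ := NT3 hb c n
  refine ⟨w, ?_⟩
  rw [fall_rat, div_eq_iff (by exact_mod_cast (Nat.factorial_ne_zero n) : ((n.factorial : ℚ)) ≠ 0)]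
  have key1 : ∏ i ∈ range n, ((b:ℚ) * (μ - i)) = ∏ i ∈ range n, ((c:ℚ) - i*b) :=
    Finset.prod_congr rfl fun i _ => by rw [← hc]; ring
  have key2 : ∏ i ∈ range n, ((b:ℚ) * (μ - i)) = (b:ℚ)^n * ∏ i ∈ range n, (μ - i) := by
    rw [Finset.prod_mul_distrib, Finset.prod_const, Finset.card_range]
  have key : (b:ℚ)^n * ∏ i ∈ range n, (μ - i) = ∏ i ∈ range n, ((c:ℚ) - i*b) :=
    key2 ▸ key1
  have hw' := congrArg (fun z : ℤ => (z : ℚ)) hw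
  push_cast at hw' ⊢
  linear_combination (∏ p ∈ b.primeFactors, (p:ℚ) ^ tau p n) * key + hw'
open Finset MvPolynomial

variable {m : ℕ}

/-- rationals that are integers -/
def IntR (x : ℚ) : Prop := ∃ z : ℤ, x = (z : ℚ)

lemma IntR_add {x y} (hx : IntR x) (hy : IntR y) : IntR (x + y) := by
  obtain ⟨a, rfl⟩ := hx; obtain ⟨c, rfl⟩ := hy; exact ⟨a + c, by push_cast; ring⟩
lemma IntR_mul {x y} (hx : IntR x) (hy : IntR y) : IntR (x * y) := by
  obtain ⟨a, rfl⟩ := hx; obtain ⟨c, rfl⟩ := hy; exact ⟨a * c, by push_cast; ring⟩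
lemma IntR_zero : IntR 0 := ⟨0, by norm_num⟩
lemma IntR_one : IntR 1 := ⟨1, by norm_num⟩
lemma IntR_int (z : ℤ) : IntR (z : ℚ) := ⟨z, rfl⟩
lemma IntR_nat (n : ℕ) : IntR (n : ℚ) := ⟨n, by push_cast; ring⟩
lemma IntR_sum {ι : Type*} {s : Finset ι} {f : ι → ℚ} (h : ∀ i ∈ s, IntR (f i)) :
    IntR (∑ i ∈ s, f i) := by
  classical
  induction s using Finset.induction_on with
  | empty => simpa using IntR_zero
  | insert x s' hx ih =>
    rw [Finset.sum_insert hx]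
    exact IntR_add (h x (mem_insert_self _ _)) (ih fun i hi => h i (mem_insert_of_mem hi))

def IsIntPoly (P : MvPolynomial (Fin m) ℚ) : Prop := ∀ d, IntR (coeff d P)

lemma II_zero : IsIntPoly (0 : MvPolynomial (Fin m) ℚ) := fun d => by rw [coeff_zero]; exact IntR_zero
lemma II_one : IsIntPoly (1 : MvPolynomial (Fin m) ℚ) := fun d => by
  rw [coeff_one]; split <;> [exact IntR_one; exact IntR_zero]
lemma II_add {P Q : MvPolynomial (Fin m) ℚ} (hP : IsIntPoly P) (hQ : IsIntPoly Q) :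
    IsIntPoly (P + Q) := fun d => by rw [coeff_add]; exact IntR_add (hP d) (hQ d)
lemma II_mul {P Q : MvPolynomial (Fin m) ℚ} (hP : IsIntPoly P) (hQ : IsIntPoly Q) :
    IsIntPoly (P * Q) := by
  intro d
  rw [coeff_mul]
  exact IntR_sum fun x _ => IntR_mul (hP _) (hQ _)
lemma II_smul {x : ℚ} (hx : IntR x) {P : MvPolynomial (Fin m) ℚ} (hP : IsIntPoly P) :
    IsIntPoly (x • P) := fun d => by
  rw [coeff_smul]; exact IntR_mul hx (hP d)
lemma II_X (j : Fin m) : IsIntPoly (X j : MvPolynomial (Fin m) ℚ) := fun d => by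
  rw [coeff_X']; split <;> [exact IntR_one; exact IntR_zero]
lemma II_C {x : ℚ} (hx : IntR x) : IsIntPoly (C x : MvPolynomial (Fin m) ℚ) := fun d => by
  classical
  rw [coeff_C]; split <;> [exact hx; exact IntR_zero]

open Finset MvPolynomial
variable {m : ℕ} (A : Matrix (Fin m) (Fin m) ℚ)

lemma derOp_add (P Q : MvPolynomial (Fin m) ℚ) :
    derOp A (P + Q) = derOp A P + derOp A Q := by
  unfold derOp
  rw [← Finset.sum_add_distrib]
  exact Finset.sum_congr rfl fun l _ => by rw [map_add, mul_add]

lemma derOp_smul (c : ℚ) (P : MvPolynomial (Fin m) ℚ) :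
    derOp A (c • P) = c • derOp A P := by
  unfold derOp
  rw [Finset.smul_sum]
  exact Finset.sum_congr rfl fun l _ => by
    rw [(pderiv l).map_smul, mul_smul_comm]

lemma derOp_zero : derOp A (0 : MvPolynomial (Fin m) ℚ) = 0 := by
  have := derOp_smul A 0 0
  simpa using this

lemma derOp_mul (P Q : MvPolynomial (Fin m) ℚ) :
    derOp A (P * Q) = derOp A P * Q + P * derOp A Q := by
  unfold derOp
  rw [Finset.sum_mul, Finset.mul_sum, ← Finset.sum_add_distrib]
  exact Finset.sum_congr rfl fun l _ => by
    rw [pderiv_mul, mul_add]; ring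

lemma derOp_sum {ι : Type*} (s : Finset ι) (f : ι → MvPolynomial (Fin m) ℚ) :
    derOp A (∑ i ∈ s, f i) = ∑ i ∈ s, derOp A (f i) := by
  classical
  induction s using Finset.induction_on with
  | empty => simpa using derOp_zero A
  | insert x s' hx ih =>
    rw [Finset.sum_insert hx, Finset.sum_insert hx, derOp_add, ih]

lemma An_zero_op (P : MvPolynomial (Fin m) ℚ) : An A 0 P = P := rfl
lemma An_succ (n : ℕ) (P : MvPolynomial (Fin m) ℚ) :
    An A (n + 1) P = derOp A (An A n P) - (n : ℚ) • An A n P := rfl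

lemma An_zero (n : ℕ) : An A n (0 : MvPolynomial (Fin m) ℚ) = 0 := by
  induction n with
  | zero => rfl
  | succ n ih => rw [An_succ, ih, derOp_zero, smul_zero, sub_zero]

lemma An_add (n : ℕ) (P Q : MvPolynomial (Fin m) ℚ) :
    An A n (P + Q) = An A n P + An A n Q := by
  induction n with
  | zero => rfl
  | succ n ih => rw [An_succ, ih, derOp_add, smul_add, An_succ, An_succ]; abel

lemma An_smul (n : ℕ) (c : ℚ) (P : MvPolynomial (Fin m) ℚ) :
    An A n (c • P) = c • An A n P := by
  induction n with
  | zero => rfl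
  | succ n ih =>
    rw [An_succ, ih, derOp_smul, An_succ, smul_sub, smul_comm (n : ℚ) c]

lemma An_sum {ι : Type*} (n : ℕ) (s : Finset ι) (f : ι → MvPolynomial (Fin m) ℚ) :
    An A n (∑ i ∈ s, f i) = ∑ i ∈ s, An A n (f i) := by
  classical
  induction s using Finset.induction_on with
  | empty => simpa using An_zero A n
  | insert x s' hx ih =>
    rw [Finset.sum_insert hx, Finset.sum_insert hx, An_add, ih]

lemma An_one (n : ℕ) (hn : 1 ≤ n) : An A n (1 : MvPolynomial (Fin m) ℚ) = 0 := by
  induction n with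
  | zero => omega
  | succ n ih =>
    rcases Nat.eq_or_lt_of_le hn with h | h
    · have h0 : n = 0 := by omega
      subst h0
      rw [An_succ]
      have : An A 0 (1 : MvPolynomial (Fin m) ℚ) = 1 := rfl
      rw [this]
      unfold derOp
      simp [pderiv_one]
    · have : 1 ≤ n := by omega
      rw [An_succ, ih this, derOp_zero, smul_zero, sub_zero]

/-- coefficients of `An A n (X j)` -/
def rowv (j : Fin m) : ℕ → Fin m → ℚ
  | 0 => fun r => if r = j then 1 else 0
  | n + 1 => fun r => (∑ l, rowv j n l * A l r) - n * rowv j n r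

lemma derOp_linform (v : Fin m → ℚ) :
    derOp A (∑ j, C (v j) * X j) = ∑ r, C (∑ l, v l * A l r) * X r := by
  unfold derOp
  have h1 : ∀ l : Fin m, (pderiv l) (∑ j, C (v j) * X j) = C (v l) := by
    intro l
    rw [map_sum]
    rw [Finset.sum_eq_single l]
    · rw [pderiv_C_mul, pderiv_X_self, mul_one]
    · intro j _ hj
      rw [pderiv_C_mul, pderiv_X_of_ne hj, mul_zero]
    · intro h; exact absurd (Finset.mem_univ l) h
  calc ∑ l, bpoly A l * (pderiv l) (∑ j, C (v j) * X j)
      = ∑ l, ∑ r, C (v l * A l r) * X r := by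
        refine Finset.sum_congr rfl fun l _ => ?_
        rw [h1]
        unfold bpoly
        rw [Finset.sum_mul]
        exact Finset.sum_congr rfl fun r _ => by rw [map_mul]; ring
    _ = ∑ r, ∑ l, C (v l * A l r) * X r := Finset.sum_comm
    _ = ∑ r, C (∑ l, v l * A l r) * X r := by
        refine Finset.sum_congr rfl fun r _ => ?_
        rw [map_sum, Finset.sum_mul]

lemma An_X (n : ℕ) (j : Fin m) :
    An A n (X j) = ∑ r, C (rowv A j n r) * X r := by
  induction n with
  | zero =>
    rw [An_zero_op]
    rw [Finset.sum_eq_single j]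
    · simp [rowv]
    · intro r _ hr
      simp [rowv, hr]
    · intro h; exact absurd (Finset.mem_univ j) h
  | succ n ih =>
    rw [An_succ, ih, derOp_linform]
    rw [Finset.smul_sum, ← Finset.sum_sub_distrib]
    refine Finset.sum_congr rfl fun r _ => ?_
    show _ = C ((∑ l, rowv A j n l * A l r) - n * rowv A j n r) * X r
    rw [map_sub, sub_mul]
    congr 1
    rw [smul_eq_C_mul, ← mul_assoc, ← map_mul]

open Finset MvPolynomial
variable {m : ℕ} (A T : Matrix (Fin m) (Fin m) ℚ) (lam : Fin m → ℚ)

lemma rowv_eq (hT : IsUnit T.det) (hA : A = T * Matrix.diagonal lam * T⁻¹)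
    (j : Fin m) (n : ℕ) (r : Fin m) :
    rowv A j n r = ∑ i, T j i * fall (lam i) n * T⁻¹ i r := by
  have hTA : ∀ i r, ∑ l, T⁻¹ i l * A l r = lam i * T⁻¹ i r := by
    have h : T⁻¹ * A = Matrix.diagonal lam * T⁻¹ := by
      rw [hA, ← Matrix.mul_assoc, ← Matrix.mul_assoc, Matrix.nonsing_inv_mul _ hT,
        Matrix.one_mul]
    intro i r
    have h2 := congrFun (congrFun h i) r
    rw [Matrix.mul_apply] at h2
    rw [h2, Matrix.diagonal_mul]
  induction n generalizing r with
  | zero =>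
    show (if r = j then (1:ℚ) else 0) = _
    have heach : ∀ i : Fin m, T j i * fall (lam i) 0 * T⁻¹ i r = T j i * T⁻¹ i r := by
      intro i; show T j i * 1 * T⁻¹ i r = _; ring
    rw [Finset.sum_congr rfl fun i _ => heach i]
    have h3 : (T * T⁻¹) j r = ∑ i, T j i * T⁻¹ i r := Matrix.mul_apply
    rw [← h3, Matrix.mul_nonsing_inv _ hT, Matrix.one_apply]
    by_cases h : r = j
    · subst h; simp
    · rw [if_neg h, if_neg (Ne.symm h)]
  | succ n ih =>
    show (∑ l, rowv A j n l * A l r) - n * rowv A j n r = _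
    simp only [ih]
    simp only [Finset.sum_mul]
    rw [Finset.sum_comm]
    have hinner : ∀ i : Fin m,
        ∑ l, T j i * fall (lam i) n * T⁻¹ i l * A l r
          = T j i * fall (lam i) n * (lam i * T⁻¹ i r) := by
      intro i
      simp only [mul_assoc]
      rw [← Finset.mul_sum, ← Finset.mul_sum]
      congr 1
      congr 1
      exact hTA i r
    rw [Finset.sum_congr rfl fun i _ => hinner i]
    rw [Finset.mul_sum, ← Finset.sum_sub_distrib]
    refine Finset.sum_congr rfl fun i _ => ?_
    have hf : fall (lam i) (n+1) = fall (lam i) n * (lam i - (n:ℚ)) := rfl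
    rw [hf]
    ring

open Finset MvPolynomial
variable {m : ℕ} (A : Matrix (Fin m) (Fin m) ℚ)

lemma An_mul (n : ℕ) (P Q : MvPolynomial (Fin m) ℚ) :
    An A n (P * Q) = ∑ i ∈ range (n+1), (n.choose i : ℚ) • (An A i P * An A (n - i) Q) := by
  induction n with
  | zero => simp [An_zero_op]
  | succ n ih =>
    have hder : ∀ (R : MvPolynomial (Fin m) ℚ) (k : ℕ),
        derOp A (An A k R) = An A (k+1) R + (k:ℚ) • An A k R := by
      intro R k; rw [An_succ]; abel
    rw [An_succ, ih, derOp_sum, Finset.smul_sum, ← Finset.sum_sub_distrib]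
    have hmain : ∀ i ∈ range (n+1),
        derOp A ((n.choose i : ℚ) • (An A i P * An A (n-i) Q))
          - (n:ℚ) • ((n.choose i : ℚ) • (An A i P * An A (n-i) Q))
        = (n.choose i : ℚ) • (An A (i+1) P * An A (n-i) Q)
          + (n.choose i : ℚ) • (An A i P * An A ((n-i)+1) Q) := by
      intro i hi
      have hi' : i ≤ n := Nat.lt_succ_iff.mp (Finset.mem_range.mp hi)
      rw [derOp_smul, derOp_mul, hder P i, hder Q (n-i)]
      have hcast : ((n - i : ℕ) : ℚ) = (n:ℚ) - (i:ℚ) := Nat.cast_sub hi'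
      simp only [hcast, smul_eq_C_mul, map_sub]
      ring
    rw [Finset.sum_congr rfl hmain, Finset.sum_add_distrib]
    have hS2 : ∑ i ∈ range (n+1), (n.choose i : ℚ) • (An A i P * An A ((n-i)+1) Q)
        = (∑ i ∈ range (n+1), (n.choose (i+1) : ℚ) • (An A (i+1) P * An A (n-i) Q))
          + (1:ℚ) • (P * An A (n+1) Q) := by
      have e1 : ∑ i ∈ range (n+2), (n.choose i : ℚ) • (An A i P * An A ((n+1)-i) Q)
          = (∑ i ∈ range (n+1), (n.choose (i+1) : ℚ) • (An A (i+1) P * An A (n-i) Q))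
            + (1:ℚ) • (P * An A (n+1) Q) := by
        rw [Finset.sum_range_succ']
        congr 1
        · refine Finset.sum_congr rfl fun i hi => ?_
          rw [Nat.succ_sub_succ]
        · simp [An_zero_op]
      have e2 : ∑ i ∈ range (n+2), (n.choose i : ℚ) • (An A i P * An A ((n+1)-i) Q)
          = ∑ i ∈ range (n+1), (n.choose i : ℚ) • (An A i P * An A ((n-i)+1) Q) := by
        rw [Finset.sum_range_succ, Nat.choose_succ_self]
        norm_num
        refine Finset.sum_congr rfl fun i hi => ?_
        have hi' : i ≤ n := Nat.lt_succ_iff.mp (Finset.mem_range.mp hi)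
        rw [Nat.succ_sub hi']
      rw [← e2, e1]
    rw [hS2]
    rw [Finset.sum_range_succ' _ (n+1)]
    have e3 : ∀ i ∈ range (n+1),
        (((n+1).choose (i+1) : ℕ) : ℚ) • (An A (i+1) P * An A ((n+1)-(i+1)) Q)
        = (n.choose i : ℚ) • (An A (i+1) P * An A (n-i) Q)
          + (n.choose (i+1) : ℚ) • (An A (i+1) P * An A (n-i) Q) := by
      intro i hi
      rw [Nat.succ_sub_succ, Nat.choose_succ_succ, Nat.cast_add, add_smul]
    rw [Finset.sum_congr rfl e3, Finset.sum_add_distrib]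
    have h00 : ((n+1).choose 0 : ℚ) • (An A 0 P * An A ((n+1)-0) Q) = (1:ℚ) • (P * An A (n+1) Q) := by
      simp [An_zero_op]
    rw [h00]
    abel

open Finset MvPolynomial

lemma II_sum {m : ℕ} {ι : Type*} {s : Finset ι} {f : ι → MvPolynomial (Fin m) ℚ}
    (h : ∀ i ∈ s, IsIntPoly (f i)) : IsIntPoly (∑ i ∈ s, f i) := fun d => by
  rw [coeff_sum]
  exact IntR_sum fun i hi => h i hi d

lemma tau_add_le (p i j : ℕ) : tau p i + tau p j ≤ tau p (i + j) := by
  have h1 : (Nat.factorial i * Nat.factorial j).factorization p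
      = tau p i + tau p j := by
    rw [Nat.factorization_mul (Nat.factorial_ne_zero i) (Nat.factorial_ne_zero j)]
    rfl
  rw [← h1]
  have h2 := (Nat.factorization_le_iff_dvd
    (Nat.mul_ne_zero (Nat.factorial_ne_zero i) (Nat.factorial_ne_zero j))
    (Nat.factorial_ne_zero (i + j))).mpr (Nat.factorial_mul_factorial_dvd_factorial_add i j)
  exact h2 p

lemma tau_mono (p : ℕ) {n k : ℕ} (h : n ≤ k) : tau p n ≤ tau p k := by
  have h2 := (Nat.factorization_le_iff_dvd (Nat.factorial_ne_zero n)
    (Nat.factorial_ne_zero k)).mpr (Nat.factorial_dvd_factorial h)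
  exact h2 p

def Dk (b t₁ t₂ : ℕ) (n : ℕ) : ℕ :=
  (t₁ * t₂)^n * b^n * ∏ p ∈ b.primeFactors, p ^ tau p n

lemma Dk_zero (b t₁ t₂ : ℕ) : Dk b t₁ t₂ 0 = 1 := by
  have : ∀ p, tau p 0 = 0 := fun p => by simp [tau, Nat.factorial]
  simp [Dk, this]

lemma Dk_mul_dvd (b t₁ t₂ i j : ℕ) : Dk b t₁ t₂ i * Dk b t₁ t₂ j ∣ Dk b t₁ t₂ (i + j) := by
  unfold Dk
  have : (t₁*t₂)^i * b^i * (∏ p ∈ b.primeFactors, p ^ tau p i)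
      * ((t₁*t₂)^j * b^j * ∏ p ∈ b.primeFactors, p ^ tau p j)
      = (t₁*t₂)^(i+j) * b^(i+j) *
        ∏ p ∈ b.primeFactors, (p ^ tau p i * p ^ tau p j) := by
    rw [Finset.prod_mul_distrib, pow_add, pow_add]; ring
  rw [this]
  refine mul_dvd_mul_left _ (Finset.prod_dvd_prod_of_dvd _ _ fun p _ => ?_)
  rw [← pow_add]
  exact pow_dvd_pow p (tau_add_le p i j)

lemma Dk_dvd_of_le (b t₁ t₂ : ℕ) {n k : ℕ} (h : n ≤ k) : Dk b t₁ t₂ n ∣ Dk b t₁ t₂ k := by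
  unfold Dk
  exact mul_dvd_mul (mul_dvd_mul (pow_dvd_pow _ h) (pow_dvd_pow _ h))
    (Finset.prod_dvd_prod_of_dvd _ _ fun p _ => pow_dvd_pow p (tau_mono p h))

section Good

variable {m : ℕ} (A : Matrix (Fin m) (Fin m) ℚ) (b t₁ t₂ : ℕ)

def good (P : MvPolynomial (Fin m) ℚ) : Prop :=
  ∀ n : ℕ, IsIntPoly (((Dk b t₁ t₂ n : ℚ) / (n.factorial : ℚ)) • An A n P)

variable {A b t₁ t₂}

lemma good_zero : good A b t₁ t₂ (0 : MvPolynomial (Fin m) ℚ) := fun n => by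
  rw [An_zero, smul_zero]; exact II_zero

lemma good_one : good A b t₁ t₂ (1 : MvPolynomial (Fin m) ℚ) := by
  intro n
  cases n with
  | zero =>
    have : ((Dk b t₁ t₂ 0 : ℚ) / (Nat.factorial 0 : ℚ)) = 1 := by
      rw [Dk_zero]; norm_num
    rw [this, one_smul]
    exact II_one
  | succ n =>
    rw [An_one A _ (Nat.succ_le_succ (Nat.zero_le n)), smul_zero]
    exact II_zero

lemma good_add {P Q : MvPolynomial (Fin m) ℚ} (hP : good A b t₁ t₂ P) (hQ : good A b t₁ t₂ Q) :
    good A b t₁ t₂ (P + Q) := fun n => by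
  rw [An_add, smul_add]
  exact II_add (hP n) (hQ n)

lemma good_qsmul {x : ℚ} (hx : IntR x) {P : MvPolynomial (Fin m) ℚ}
    (hP : good A b t₁ t₂ P) : good A b t₁ t₂ (x • P) := fun n => by
  rw [An_smul, smul_comm]
  exact II_smul hx (hP n)

lemma good_mul {P Q : MvPolynomial (Fin m) ℚ} (hP : good A b t₁ t₂ P) (hQ : good A b t₁ t₂ Q) :
    good A b t₁ t₂ (P * Q) := by
  intro n
  rw [An_mul, Finset.smul_sum]
  refine II_sum fun i hi => ?_
  have hi' : i ≤ n := Nat.lt_succ_iff.mp (Finset.mem_range.mp hi)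
  have hin : i + (n - i) = n := Nat.add_sub_cancel' hi'
  obtain ⟨E, hE⟩ : Dk b t₁ t₂ i * Dk b t₁ t₂ (n - i) ∣ Dk b t₁ t₂ n := by
    conv_rhs => rw [← hin]
    exact Dk_mul_dvd b t₁ t₂ i (n - i)
  have hEq : (Dk b t₁ t₂ n : ℚ) = (Dk b t₁ t₂ i : ℚ) * (Dk b t₁ t₂ (n - i) : ℚ) * (E : ℚ) := by
    exact_mod_cast congrArg (fun x : ℕ => (x : ℚ)) hE
  have hscal : ((Dk b t₁ t₂ n : ℚ) / (n.factorial : ℚ)) * (n.choose i : ℚ)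
      = (E : ℚ) * (((Dk b t₁ t₂ i : ℚ) / (i.factorial : ℚ))
        * ((Dk b t₁ t₂ (n - i) : ℚ) / ((n - i).factorial : ℚ))) := by
    rw [Nat.cast_choose ℚ hi', hEq]
    have h1 : (i.factorial : ℚ) ≠ 0 := by exact_mod_cast Nat.factorial_ne_zero i
    have h2 : ((n - i).factorial : ℚ) ≠ 0 := by exact_mod_cast Nat.factorial_ne_zero (n - i)
    have h3 : (n.factorial : ℚ) ≠ 0 := by exact_mod_cast Nat.factorial_ne_zero n
    field_simp
  have hterm : ((Dk b t₁ t₂ n : ℚ) / (n.factorial : ℚ)) •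
        ((n.choose i : ℚ) • (An A i P * An A (n - i) Q))
      = (E : ℚ) • ((((Dk b t₁ t₂ i : ℚ) / (i.factorial : ℚ)) • An A i P)
        * (((Dk b t₁ t₂ (n - i) : ℚ) / ((n - i).factorial : ℚ)) • An A (n - i) Q)) := by
    rw [smul_smul, smul_mul_smul_comm, smul_smul, hscal]
  rw [hterm]
  exact II_smul (IntR_int E) (II_mul (hP i) (hQ (n - i)))

lemma good_pow {P : MvPolynomial (Fin m) ℚ} (hP : good A b t₁ t₂ P) (k : ℕ) :
    good A b t₁ t₂ (P ^ k) := by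
  induction k with
  | zero => rw [pow_zero]; exact good_one
  | succ k ih => rw [pow_succ]; exact good_mul ih hP

lemma good_sum {ι : Type*} {s : Finset ι} {f : ι → MvPolynomial (Fin m) ℚ}
    (h : ∀ i ∈ s, good A b t₁ t₂ (f i)) : good A b t₁ t₂ (∑ i ∈ s, f i) := by
  classical
  induction s using Finset.induction_on with
  | empty => simpa using good_zero
  | insert x s' hx ih =>
    rw [Finset.sum_insert hx]
    exact good_add (h x (mem_insert_self _ _)) (ih fun i hi => h i (mem_insert_of_mem hi))

lemma good_prod {ι : Type*} {s : Finset ι} {f : ι → MvPolynomial (Fin m) ℚ}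
    (h : ∀ i ∈ s, good A b t₁ t₂ (f i)) : good A b t₁ t₂ (∏ i ∈ s, f i) := by
  classical
  induction s using Finset.induction_on with
  | empty => simpa using good_one
  | insert x s' hx ih =>
    rw [Finset.prod_insert hx]
    exact good_mul (h x (mem_insert_self _ _)) (ih fun i hi => h i (mem_insert_of_mem hi))

end Good

open Finset MvPolynomial

variable {m : ℕ} {A T : Matrix (Fin m) (Fin m) ℚ} {lam : Fin m → ℚ} {b t₁ t₂ : ℕ}

lemma good_X (hT : IsUnit T.det) (hA : A = T * Matrix.diagonal lam * T⁻¹)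
    (hb0 : 0 < b) (hbl : ∀ i, ∃ z : ℤ, (b:ℚ) * lam i = (z:ℚ))
    (h1 : ∀ i j, ∃ z : ℤ, (t₁:ℚ) * T i j = (z:ℚ))
    (h2 : ∀ i j, ∃ z : ℤ, (t₂:ℚ) * T⁻¹ i j = (z:ℚ))
    (j : Fin m) : good A b t₁ t₂ (X j) := by
  intro n
  cases n with
  | zero =>
    have h : ((Dk b t₁ t₂ 0 : ℚ) / (Nat.factorial 0 : ℚ)) = 1 := by
      rw [Dk_zero]; norm_num
    rw [h, one_smul]
    exact II_X j
  | succ n =>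
    rw [An_X, Finset.smul_sum]
    refine II_sum fun r _ => ?_
    rw [smul_eq_C_mul, ← mul_assoc, ← map_mul]
    refine II_mul (II_C ?_) (II_X r)
    rw [rowv_eq A T lam hT hA j (n+1) r, Finset.mul_sum]
    refine IntR_sum fun i _ => ?_
    obtain ⟨z1, hz1⟩ := h1 j i
    obtain ⟨z2, hz2⟩ := h2 i r
    obtain ⟨c, hc⟩ := hbl i
    obtain ⟨z3, hz3⟩ := KS hb0 hc (n+1)
    have hf : ((n+1).factorial : ℚ) ≠ 0 := by exact_mod_cast Nat.factorial_ne_zero (n+1)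
    have e : ((Dk b t₁ t₂ (n+1) : ℚ) / ((n+1).factorial : ℚ))
          * (T j i * fall (lam i) (n+1) * T⁻¹ i r)
        = (((t₁*t₂)^n : ℕ) : ℚ) * ((((t₁:ℚ) * T j i) * ((t₂:ℚ) * T⁻¹ i r))
          * (((b^(n+1) * ∏ p ∈ b.primeFactors, p ^ tau p (n+1) : ℕ) : ℚ)
            * fall (lam i) (n+1) / ((n+1).factorial : ℚ))) := by
      unfold Dk
      push_cast
      field_simp
      ring
    rw [e]
    exact IntR_mul (IntR_nat _)
      (IntR_mul (IntR_mul ⟨z1, hz1⟩ ⟨z2, hz2⟩) ⟨z3, hz3⟩)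

lemma good_intpoly (hT : IsUnit T.det) (hA : A = T * Matrix.diagonal lam * T⁻¹)
    (hb0 : 0 < b) (hbl : ∀ i, ∃ z : ℤ, (b:ℚ) * lam i = (z:ℚ))
    (h1 : ∀ i j, ∃ z : ℤ, (t₁:ℚ) * T i j = (z:ℚ))
    (h2 : ∀ i j, ∃ z : ℤ, (t₂:ℚ) * T⁻¹ i j = (z:ℚ))
    {P : MvPolynomial (Fin m) ℚ} (hP : IsIntPoly P) : good A b t₁ t₂ P := by
  have hmono : ∀ α : Fin m →₀ ℕ, good A b t₁ t₂ (monomial α 1) := by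
    intro α
    rw [monomial_eq, C_1, one_mul, Finsupp.prod]
    exact good_prod fun i _ => good_pow (good_X hT hA hb0 hbl h1 h2 i) (α i)
  have hrep : P = ∑ α ∈ P.support, (coeff α P) • monomial α 1 := by
    conv_lhs => rw [← support_sum_monomial_coeff P]
    exact Finset.sum_congr rfl fun α _ => by rw [smul_monomial, smul_eq_mul, mul_one]
  rw [hrep]
  exact good_sum fun α _ => good_qsmul (hP α) (hmono α)

lemma part2core (hT : IsUnit T.det) (hA : A = T * Matrix.diagonal lam * T⁻¹)
    (hb0 : 0 < b) (hbl : ∀ i, ∃ z : ℤ, (b:ℚ) * lam i = (z:ℚ))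
    (h1 : ∀ i j, ∃ z : ℤ, (t₁:ℚ) * T i j = (z:ℚ))
    (h2 : ∀ i j, ∃ z : ℤ, (t₂:ℚ) * T⁻¹ i j = (z:ℚ))
    {k n : ℕ} (hnk : n ≤ k) {P : MvPolynomial (Fin m) ℚ} (hP : IsIntPoly P) :
    IsIntPoly ((Dk b t₁ t₂ k : ℚ) • (((n.factorial : ℚ))⁻¹ • An A n P)) := by
  obtain ⟨w, hw⟩ := Dk_dvd_of_le b t₁ t₂ hnk
  have hwq : (Dk b t₁ t₂ k : ℚ) = (Dk b t₁ t₂ n : ℚ) * (w : ℚ) := by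
    exact_mod_cast congrArg (fun x : ℕ => (x : ℚ)) hw
  have hs : (Dk b t₁ t₂ k : ℚ) • (((n.factorial : ℚ))⁻¹ • An A n P)
      = (w : ℚ) • (((Dk b t₁ t₂ n : ℚ) / (n.factorial : ℚ)) • An A n P) := by
    rw [smul_smul, smul_smul, hwq, div_eq_mul_inv]
    ring_nf
  rw [hs]
  exact II_smul (IntR_int w) (good_intpoly hT hA hb0 hbl h1 h2 hP n)

end S18

/-- let `A = T·diag(λ₁,…,λ_m)·T⁻¹` be a rational matrix whose minimal
polynomial has no repeated roots and splits over `ℚ`; let `b` be the least common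
denominator of the `λ_j`, and `t₁, t₂` those of the entries of `T`, `T⁻¹`.  Then
`ψ_k = (t₁t₂)^k·b^k·∏_{p ∣ b} p^{τ_p(k)}` makes each operator `ψ_k·(1/n!)·A_n`
(`n ≤ k`) map `ℤ[y₁,…,y_m]` into itself, and `limsup ψ_k^{1/k} ≤ t₁t₂·b·e^{χ(b)}`. -/
theorem stmt_18 {m : ℕ} (A T : Matrix (Fin m) (Fin m) ℚ) (hT : IsUnit T.det)
    (lam : Fin m → ℚ) (hA : A = T * Matrix.diagonal lam * T⁻¹)
    (b t₁ t₂ : ℕ)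
    (hb : IsLeast {t : ℕ | 0 < t ∧ ∀ j, ∃ z : ℤ, (t : ℚ) * lam j = (z : ℚ)} b)
    (ht₁ : IsLeast {t : ℕ | 0 < t ∧ ∀ i j, ∃ z : ℤ, (t : ℚ) * T i j = (z : ℚ)} t₁)
    (ht₂ : IsLeast {t : ℕ | 0 < t ∧ ∀ i j, ∃ z : ℤ, (t : ℚ) * T⁻¹ i j = (z : ℚ)} t₂)
    (ψ : ℕ → ℕ)
    (hψ : ∀ k, ψ k = (t₁ * t₂) ^ k * b ^ k * ∏ p ∈ b.primeFactors, p ^ tau p k) :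
    (∀ k, 0 < ψ k) ∧
    (∀ k : ℕ, ∀ n ≤ k, ∀ P : MvPolynomial (Fin m) ℚ,
      (∀ d : Fin m →₀ ℕ, ∃ z : ℤ, MvPolynomial.coeff d P = (z : ℚ)) →
      ∀ d : Fin m →₀ ℕ, ∃ z : ℤ,
        MvPolynomial.coeff d ((ψ k : ℚ) • ((n.factorial : ℚ)⁻¹ • An A n P)) = (z : ℚ)) ∧
    Filter.limsup (fun k => (ψ k : ℝ) ^ (1 / (k : ℝ))) Filter.atTop
      ≤ (t₁ : ℝ) * t₂ * b * Real.exp (chi b) := by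
  have hb0 : 0 < b := hb.1.1
  have ht10 : 0 < t₁ := ht₁.1.1
  have ht20 : 0 < t₂ := ht₂.1.1
  refine ⟨?_, ?_, ?_⟩
  · intro k
    rw [hψ k]
    have hpr : 0 < ∏ p ∈ b.primeFactors, p ^ tau p k :=
      Finset.prod_pos fun p hp => pow_pos (Nat.prime_of_mem_primeFactors hp).pos _
    exact mul_pos (mul_pos (pow_pos (mul_pos ht10 ht20) k) (pow_pos hb0 k)) hpr
  · intro k n hnk P hP d
    have hcore := S18.part2core hT hA hb0 hb.1.2 ht₁.1.2 ht₂.1.2 hnk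
      (P := P) (fun d' => hP d') d
    have hDk : (ψ k : ℚ) = (S18.Dk b t₁ t₂ k : ℚ) := by
      rw [hψ k]; rfl
    rw [hDk]
    exact hcore
  · set Cst : ℝ := (t₁ : ℝ) * t₂ * b * Real.exp (chi b) with hCst
    have hCnn : (0:ℝ) ≤ Cst := by positivity
    refine Filter.limsup_le_of_le
      (Filter.isCoboundedUnder_le_of_le Filter.atTop (x := 0)
        fun k => Real.rpow_nonneg (Nat.cast_nonneg _) _) ?_
    filter_upwards [Filter.eventually_ge_atTop 1] with k hk
    have hψle : (ψ k : ℝ) ≤ Cst ^ k := by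
      rw [hψ k]
      have hprod : ∏ p ∈ b.primeFactors, (p:ℝ) ^ tau p k ≤ Real.exp (chi b) ^ k := by
        rw [← Real.exp_nat_mul, chi, Finset.mul_sum, Real.exp_sum]
        refine Finset.prod_le_prod (fun p _ => by positivity) (fun p hp' => ?_)
        have hp : p.Prime := Nat.prime_of_mem_primeFactors hp'
        haveI : Fact p.Prime := ⟨hp⟩
        have hleg : (p - 1) * tau p k ≤ k := by
          have hs := sub_one_mul_padicValNat_factorial (p := p) k
          rw [tau, Nat.factorization_def _ hp]
          omega
        have hp2 : (2:ℝ) ≤ (p:ℝ) := by exact_mod_cast hp.two_le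
        have hlog : 0 ≤ Real.log p := Real.log_nonneg (by linarith)
        have hp1 : (0:ℝ) < (p:ℝ) - 1 := by linarith
        have htk : (tau p k : ℝ) * ((p:ℝ) - 1) ≤ (k:ℝ) := by
          have hcast : (((p-1) * tau p k : ℕ) : ℝ) = ((p:ℝ) - 1) * (tau p k : ℝ) := by
            push_cast [Nat.cast_sub hp.one_le]
            ring
          have := (Nat.cast_le (α := ℝ)).mpr hleg
          rw [hcast] at this
          linarith
        have hexp : (p:ℝ) ^ tau p k = Real.exp ((tau p k : ℝ) * Real.log p) := by
          rw [Real.exp_nat_mul, Real.exp_log (by linarith : (0:ℝ) < (p:ℝ))]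
        rw [hexp]
        refine Real.exp_le_exp.mpr ?_
        rw [div_eq_mul_inv, ← mul_assoc]
        rw [show (k:ℝ) * Real.log p * ((p:ℝ)-1)⁻¹ = ((k:ℝ) * ((p:ℝ)-1)⁻¹) * Real.log p by ring]
        refine mul_le_mul_of_nonneg_right ?_ hlog
        have htk2 := (le_div_iff₀ hp1).mpr htk
        rwa [div_eq_mul_inv] at htk2
      have hpsiR : (((t₁ * t₂) ^ k * b ^ k * ∏ p ∈ b.primeFactors, p ^ tau p k : ℕ) : ℝ)
          = ((t₁:ℝ) * t₂)^k * (b:ℝ)^k * ∏ p ∈ b.primeFactors, (p:ℝ) ^ tau p k := by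
        push_cast
        ring
      rw [hpsiR, hCst]
      calc ((t₁:ℝ) * t₂)^k * (b:ℝ)^k * ∏ p ∈ b.primeFactors, (p:ℝ) ^ tau p k
          ≤ ((t₁:ℝ) * t₂)^k * (b:ℝ)^k * Real.exp (chi b) ^ k := by
            refine mul_le_mul_of_nonneg_left hprod (by positivity)
        _ = ((t₁:ℝ) * t₂ * b * Real.exp (chi b)) ^ k := by
            rw [mul_pow, mul_pow, mul_pow]
            ring
    have h0 : (0:ℝ) ≤ (ψ k : ℝ) := Nat.cast_nonneg _
    have hstep : (ψ k : ℝ) ^ (1/(k:ℝ)) ≤ (Cst ^ k) ^ (1/(k:ℝ)) :=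
      Real.rpow_le_rpow h0 hψle (by positivity)
    refine hstep.trans_eq ?_
    have hk0 : (k:ℝ) ≠ 0 := by
      have : (0:ℕ) < k := hk
      exact_mod_cast this.ne'
    rw [← Real.rpow_natCast Cst k, ← Real.rpow_mul hCnn, mul_one_div, div_self hk0,
      Real.rpow_one]
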